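/- arXiv:1004.4073 — 3 statements merged into one kernel-verified Lean document; each statement's English description precedes it below -/
import Mathlib

section
/- Let ρ : ℝ³ → ℝ be continuous, compactly supported, nonnegative, and not identically zero, with support contained in the half space {x¹ > 0}. Let U(x) = −G ∫ ρ(x')/|x−x'| dx' be its Newtonian potential. Then on every plane Σ_c = {x¹ = c} with c ≤ 0, the derivative in the direction of the left normal is strictly positive: −∂₁U(x) > 0 for all x ∈ Σ_c. (Equivalently, the gravitational force due to a body on the other side of a separating plane is attractive.) -/
open Real MeasureTheory

noncomputable section

abbrev E3 := EuclideanSpace ℝ (Fin 3)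

def pd (i : Fin 3) (f : E3 → ℝ) (x : E3) : ℝ :=
  fderiv ℝ f x (EuclideanSpace.single i 1)

/-- The decaying Newtonian potential `U(x) = −G ∫ ρ(x') / |x − x'| dx'`. -/
def newtPot (G : ℝ) (ρ : E3 → ℝ) (x : E3) : ℝ :=
  -G * ∫ y, ρ y / ‖x - y‖

/-!
Since `x` lies outside the closed support of `ρ`, the kernel `y ↦ |z - y|⁻¹` and its gradient
are uniformly bounded for `y ∈ supp ρ` and `z` near `x`, so the potential may be differentiated
under the integral sign. This gives `−∂₁U(x) = G ∫ ρ(y) (y¹ − x¹) / |x − y|³ dy`, whose integrand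
is positive wherever `ρ` is (there `y¹ > 0 ≥ x¹`) and vanishes elsewhere; as `{ρ > 0}` is a
nonempty open set, the integral is positive.
-/

open Metric Function Filter
open scoped RealInnerProductSpace

section InvNorm

variable {E : Type*} [NormedAddCommGroup E] [InnerProductSpace ℝ E]

def invNormDeriv (w : E) : E →L[ℝ] ℝ := -(‖w‖ ^ 3)⁻¹ • innerSL ℝ w

theorem invNormDeriv_sub_apply (x y v : E) :
    invNormDeriv (x - y) v = ⟪y - x, v⟫ / ‖x - y‖ ^ 3 := by
  simp only [invNormDeriv, smul_apply, innerSL_apply_apply, smul_eq_mul]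
  rw [← neg_sub y x, inner_neg_left, norm_neg]
  ring

theorem norm_invNormDeriv (w : E) : ‖invNormDeriv w‖ = (‖w‖ ^ 2)⁻¹ := by
  rcases eq_or_ne w 0 with rfl | hw
  · simp [invNormDeriv]
  · have : 0 < ‖w‖ := norm_pos_iff.mpr hw
    rw [invNormDeriv, norm_smul, innerSL_apply_norm, norm_neg, norm_inv, norm_pow, norm_norm]
    field_simp

theorem hasFDerivAt_inv_norm {w : E} (hw : w ≠ 0) :
    HasFDerivAt (fun v : E => ‖v‖⁻¹) (invNormDeriv w) w := by
  have hpos : 0 < ‖w‖ := norm_pos_iff.mpr hw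
  have h := (hasStrictFDerivAt_norm_sq w).hasFDerivAt.rpow_const (p := -(1 / 2))
    (Or.inl (by positivity))
  convert h using 1
  · funext v
    rw [← Real.rpow_natCast, ← Real.rpow_mul (norm_nonneg v)]
    norm_num [Real.rpow_neg_one]
  · have : (‖w‖ ^ 2) ^ (-(1 / 2) - 1 : ℝ) = (‖w‖ ^ 3)⁻¹ := by
      rw [← Real.rpow_natCast, ← Real.rpow_mul hpos.le, ← Real.rpow_natCast,
        ← Real.rpow_neg hpos.le]
      norm_num
    rw [this, invNormDeriv, ← Nat.cast_smul_eq_nsmul ℝ, smul_smul]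
    congr 1
    push_cast
    ring

theorem hasFDerivAt_inv_norm_sub {x y : E} (h : x ≠ y) :
    HasFDerivAt (fun z => ‖z - y‖⁻¹) (invNormDeriv (x - y)) x := by
  exact (hasFDerivAt_inv_norm (sub_ne_zero.mpr h)).comp x ((hasFDerivAt_id x).sub_const y)

end InvNorm

theorem exists_pos_forall_mem_ball_le_dist {X : Type*} [PseudoMetricSpace X] {K : Set X}
    (hK : IsClosed K) {x : X} (hx : x ∉ K) :
    ∃ r > 0, ∀ z ∈ ball x r, ∀ y ∈ K, r ≤ dist z y := by
  obtain ⟨ε, hε, hball⟩ := Metric.isOpen_iff.mp hK.isOpen_compl x hx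
  refine ⟨ε / 2, by positivity, fun z hz y hy => ?_⟩
  have hxy : ε ≤ dist x y := not_lt.mp fun h => hball (mem_ball'.mpr h) hy
  linarith [dist_triangle x z y, mem_ball'.mp hz]

theorem norm_mul_inv_pow_norm_sub_le {E F : Type*} [NormedAddCommGroup E]
    [NormedAddCommGroup F] {ρ : E → F} {r : ℝ} (hr : 0 < r) {z : E}
    (hz : ∀ y ∈ tsupport ρ, r ≤ ‖z - y‖) (n : ℕ) (y : E) :
    ‖ρ y‖ * (‖z - y‖ ^ n)⁻¹ ≤ ‖ρ y‖ * (r ^ n)⁻¹ := by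
  by_cases hy : y ∈ tsupport ρ
  · gcongr
    exact hz y hy
  · simp [image_eq_zero_of_notMem_tsupport hy]

section Potential

variable {E : Type*} [NormedAddCommGroup E] [InnerProductSpace ℝ E] [MeasurableSpace E]
  {μ : Measure E} {ρ : E → ℝ} {x : E}

theorem stronglyMeasurable_invNormDeriv [OpensMeasurableSpace E] [SecondCountableTopology E] :
    StronglyMeasurable (invNormDeriv : E → E →L[ℝ] ℝ) :=
  -- without this, instance search tries the operator space first and times out
  haveI := secondCountableTopologyEither_of_left E (E →L[ℝ] ℝ)
  (measurable_norm.pow_const 3).inv.neg.stronglyMeasurable.smul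
    (innerSL ℝ).continuous.stronglyMeasurable

theorem hasFDerivAt_integral_div_norm_sub [BorelSpace E] [SecondCountableTopology E]
    [IsFiniteMeasureOnCompacts μ] (hρc : Continuous ρ) (hρs : HasCompactSupport ρ)
    (hx : x ∉ tsupport ρ) :
    Integrable (fun y => ρ y • invNormDeriv (x - y)) μ ∧
      HasFDerivAt (fun z => ∫ y, ρ y / ‖z - y‖ ∂μ) (∫ y, ρ y • invNormDeriv (x - y) ∂μ) x := by
  obtain ⟨r, hr, hsep⟩ := exists_pos_forall_mem_ball_le_dist (isClosed_tsupport ρ) hx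
  simp only [dist_eq_norm] at hsep
  have hρi : Integrable ρ μ := hρc.integrable_of_hasCompactSupport hρs
  have hmeas : ∀ z, AEStronglyMeasurable (fun y => ρ y / ‖z - y‖) μ := fun z =>
    (hρc.measurable.div (measurable_const.sub measurable_id).norm).aestronglyMeasurable
  have hmeas' : AEStronglyMeasurable (fun y => ρ y • invNormDeriv (x - y)) μ :=
    hρc.aestronglyMeasurable.smul (stronglyMeasurable_invNormDeriv.comp_measurable
      (measurable_const.sub measurable_id)).aestronglyMeasurable
  have hbound : ∀ z ∈ ball x r, ∀ y, ‖ρ y • invNormDeriv (z - y)‖ ≤ ‖ρ y‖ * (r ^ 2)⁻¹ :=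
    fun z hz y => by
      simpa [norm_smul, norm_invNormDeriv] using norm_mul_inv_pow_norm_sub_le hr (hsep z hz) 2 y
  have hint : Integrable (fun y => ρ y / ‖x - y‖) μ := by
    refine (hρi.norm.mul_const r⁻¹).mono' (hmeas x) (Eventually.of_forall fun y => ?_)
    simpa [norm_div, div_eq_mul_inv] using
      norm_mul_inv_pow_norm_sub_le hr (hsep x (mem_ball_self hr)) 1 y
  have hdiff : ∀ y, ∀ z ∈ ball x r,
      HasFDerivAt (fun w => ρ y / ‖w - y‖) (ρ y • invNormDeriv (z - y)) z := fun y z hz => by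
    by_cases hy : y ∈ tsupport ρ
    · have hzy : z ≠ y := fun h => by simpa [h] using (hr.trans_le (hsep z hz y hy)).ne'
      simpa only [div_eq_mul_inv, smul_eq_mul] using
        (hasFDerivAt_inv_norm_sub hzy).const_mul (ρ y)
    · simpa [image_eq_zero_of_notMem_tsupport hy] using hasFDerivAt_const (0 : ℝ) z
  refine ⟨(hρi.norm.mul_const _).mono' hmeas'
    (Eventually.of_forall (hbound x (mem_ball_self hr))), ?_⟩
  exact hasFDerivAt_integral_of_dominated_of_fderiv_le (ball_mem_nhds x hr)
    (Eventually.of_forall hmeas) hint hmeas'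
    (Eventually.of_forall fun y z hz => hbound z hz y) (hρi.norm.mul_const _)
    (Eventually.of_forall hdiff)

theorem integral_mul_inner_div_pos [μ.IsOpenPosMeasure] (hρc : Continuous ρ)
    (hρnn : ∀ y, 0 ≤ ρ y) (hρne : ρ ≠ 0) {v : E}
    (hint : Integrable (fun y => ρ y * ⟪y - x, v⟫ / ‖x - y‖ ^ 3) μ)
    (hv : ∀ y ∈ tsupport ρ, 0 < ⟪y - x, v⟫) :
    0 < ∫ y, ρ y * ⟪y - x, v⟫ / ‖x - y‖ ^ 3 ∂μ := by
  have hpos : ∀ y, ρ y ≠ 0 → 0 < ρ y * ⟪y - x, v⟫ / ‖x - y‖ ^ 3 := fun y hy => by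
    have hyv := hv y (subset_tsupport ρ hy)
    have hxy : x - y ≠ 0 := fun h => by simp [sub_eq_zero.mp h] at hyv
    have := (hρnn y).lt_of_ne' hy
    have := norm_pos_iff.mpr hxy
    positivity
  have hnn : 0 ≤ fun y => ρ y * ⟪y - x, v⟫ / ‖x - y‖ ^ 3 := fun y => by
    by_cases hy : ρ y = 0
    · simp [hy]
    · exact (hpos y hy).le
  rw [integral_pos_iff_support_of_nonneg hnn hint]
  obtain ⟨y, hy⟩ := Function.ne_iff.mp hρne
  exact (hρc.isOpen_support.measure_pos μ ⟨y, hy⟩).trans_le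
    (measure_mono fun y hy => (hpos y hy).ne')

end Potential

/-- if `ρ ≥ 0` is continuous, compactly supported, not identically zero,
and supported in `{x¹ > 0}`, then on every plane `{x¹ = c}` with `c ≤ 0` the derivative
of the Newtonian potential in the direction of the left normal `−e₁` is strictly
positive: `−∂₁U > 0` (the force exerted by the body is attractive). -/
theorem attraction_across_separating_plane (G : ℝ) (hG : 0 < G)
    (ρ : E3 → ℝ) (hρc : Continuous ρ) (hρs : HasCompactSupport ρ)
    (hρnn : ∀ x, 0 ≤ ρ x) (hρne : ρ ≠ 0)
    (hsupp : tsupport ρ ⊆ {x : E3 | 0 < x 0}) :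
    ∀ c ≤ (0 : ℝ), ∀ x : E3, x 0 = c → 0 < -pd 0 (newtPot G ρ) x := by
  intro c hc x hx
  rw [pd]
  set e₀ : E3 := EuclideanSpace.single 0 1
  have hright : ∀ y ∈ tsupport ρ, 0 < ⟪y - x, e₀⟫ := fun y hy => by
    have : 0 < y 0 := hsupp hy
    simp [e₀, EuclideanSpace.inner_single_right]
    linarith
  have hxρ : x ∉ tsupport ρ := fun h => by simpa using hright x h
  obtain ⟨hint, hderiv⟩ := hasFDerivAt_integral_div_norm_sub (μ := volume) hρc hρs hxρ
  have hU : HasFDerivAt (newtPot G ρ) _ x := hderiv.const_mul (-G)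
  have hdir : ∀ y, (ρ y • invNormDeriv (x - y)) e₀ = ρ y * ⟪y - x, e₀⟫ / ‖x - y‖ ^ 3 :=
    fun y => by rw [smul_apply, invNormDeriv_sub_apply, smul_eq_mul, mul_div_assoc]
  rw [hU.fderiv, smul_apply, ContinuousLinearMap.integral_apply hint]
  simp only [hdir, smul_eq_mul, neg_mul, neg_neg]
  exact mul_pos hG (integral_mul_inner_div_pos hρc hρnn hρne
    ((hint.apply_continuousLinearMap e₀).congr (Eventually.of_forall hdir)) hright)
end
end

section
/- In the Giulini theory, the field equation ΔU = (4πG/c²) Σ_α ε_α χ_{Ω_α} − (1/(2c²))|∇U|² is linearized by the substitution Ψ = e^{U/(2c²)}: U solves the nonlinear equation if and only if Ψ solves ΔΨ = (2πG/c⁴) Ψ Σ_α ε_α χ_{Ω_α}. -/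
/-!
Writing `Ψ = φ ∘ U` with `φ t = exp (t / a)`, the chain rule for the Laplacian gives
`ΔΨ = φ'(U) ΔU + φ''(U) |∇U|² = (Ψ / a) (ΔU + |∇U|² / a)`.
With `a = 2c²` the gradient term of the nonlinear equation is exactly absorbed, and since
`Ψ / a ≠ 0` the two equations are equivalent pointwise.
-/

open Real MeasureTheory

noncomputable section

def lap (f : E3 → ℝ) (x : E3) : ℝ :=
  ∑ i, pd i (pd i f) x

theorem pd_comp {φ : ℝ → ℝ} {U : E3 → ℝ} {x : E3} (i : Fin 3)
    (hφ : DifferentiableAt ℝ φ (U x)) (hU : DifferentiableAt ℝ U x) :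
    pd i (φ ∘ U) x = deriv φ (U x) * pd i U x := by
  rw [pd, (hφ.hasDerivAt.comp_hasFDerivAt x hU.hasFDerivAt).fderiv]
  rfl

theorem pd_mul {f g : E3 → ℝ} {x : E3} (i : Fin 3)
    (hf : DifferentiableAt ℝ f x) (hg : DifferentiableAt ℝ g x) :
    pd i (fun y => f y * g y) x = pd i f x * g x + f x * pd i g x := by
  rw [pd, fderiv_fun_mul hf hg]
  simp only [add_apply, smul_apply, smul_eq_mul, pd]
  ring

theorem ContDiff.differentiable_pd {U : E3 → ℝ} (hU : ContDiff ℝ 2 U) (i : Fin 3) :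
    Differentiable ℝ (pd i U) :=
  let evalAt : (E3 →L[ℝ] ℝ) →L[ℝ] ℝ :=
    ContinuousLinearMap.apply ℝ ℝ (EuclideanSpace.single i 1)
  show Differentiable ℝ (evalAt ∘ fderiv ℝ U) from
    (evalAt.contDiff.comp (hU.fderiv_right le_rfl)).differentiable one_ne_zero

theorem lap_comp {φ : ℝ → ℝ} {U : E3 → ℝ} (hφ : ContDiff ℝ 2 φ) (hU : ContDiff ℝ 2 U) (x : E3) :
    lap (φ ∘ U) x = deriv φ (U x) * lap U x + deriv (deriv φ) (U x) * ∑ i, pd i U x ^ 2 := by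
  have hφd : Differentiable ℝ φ := hφ.differentiable (by norm_num)
  have hφ'd : Differentiable ℝ (deriv φ) := (hφ.deriv' (n := 1)).differentiable one_ne_zero
  have hUd : Differentiable ℝ U := hU.differentiable (by norm_num)
  have hpd_comp (i : Fin 3) : pd i (φ ∘ U) = fun y => (deriv φ ∘ U) y * pd i U y :=
    funext fun y => pd_comp i (hφd _) (hUd y)
  have hpd_pd_comp (i : Fin 3) : pd i (pd i (φ ∘ U)) x =
      deriv φ (U x) * pd i (pd i U) x + deriv (deriv φ) (U x) * pd i U x ^ 2 := by
    rw [hpd_comp, pd_mul i ((hφ'd _).comp x (hUd x)) (hU.differentiable_pd i x),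
      pd_comp i (hφ'd _) (hUd x)]
    simp only [Function.comp_apply]
    ring
  simp only [lap, hpd_pd_comp, Finset.sum_add_distrib, Finset.mul_sum]

theorem hasDerivAt_exp_div (a t : ℝ) :
    HasDerivAt (fun s => exp (s / a)) (exp (t / a) / a) t := by
  simpa [one_div, div_eq_mul_inv] using ((hasDerivAt_id t).div_const a).exp

theorem lap_exp_div {U : E3 → ℝ} (hU : ContDiff ℝ 2 U) (a : ℝ) (x : E3) :
    lap (fun y => exp (U y / a)) x =
      exp (U x / a) / a * (lap U x + (∑ i, pd i U x ^ 2) / a) := by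
  have hderiv : deriv (fun s => exp (s / a)) = fun s => exp (s / a) / a :=
    funext fun t => (hasDerivAt_exp_div a t).deriv
  have hderiv2 : deriv (fun s => exp (s / a) / a) = fun s => exp (s / a) / a / a :=
    funext fun t => ((hasDerivAt_exp_div a t).div_const a).deriv
  have hφ : ContDiff ℝ 2 (fun s => exp (s / a)) := by fun_prop
  rw [show (fun y => exp (U y / a)) = (fun s => exp (s / a)) ∘ U from rfl, lap_comp hφ hU,
    hderiv, hderiv2]
  ring

theorem giulini_linearization_general (G c : ℝ) (hc : 0 < c)
    (N : ℕ) (Ω : Fin N → Set E3)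
    (ε : Fin N → E3 → ℝ)
    (U : E3 → ℝ) (hU : ContDiff ℝ 2 U) :
    (∀ x, lap U x =
        (4 * π * G / c ^ 2) * ∑ α, Set.indicator (Ω α) (ε α) x
          - (1 / (2 * c ^ 2)) * ∑ i, (pd i U x) ^ 2) ↔
    (∀ x, lap (fun y => Real.exp (U y / (2 * c ^ 2))) x =
        (2 * π * G / c ^ 4) * Real.exp (U x / (2 * c ^ 2)) *
          ∑ α, Set.indicator (Ω α) (ε α) x) := by
  refine forall_congr' fun x => ?_
  set Ψ := exp (U x / (2 * c ^ 2))
  set ρ := ∑ α, Set.indicator (Ω α) (ε α) x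
  have hsource : 2 * π * G / c ^ 4 * Ψ * ρ = Ψ / (2 * c ^ 2) * (4 * π * G / c ^ 2 * ρ) := by
    field_simp
    ring
  have hfactor : Ψ / (2 * c ^ 2) ≠ 0 := by positivity
  rw [lap_exp_div hU, hsource, mul_right_inj' hfactor, one_div_mul_eq_div, eq_sub_iff_add_eq]

/-- the Giulini field equation
`ΔU = (4πG/c²) Σ_α ε_α χ_{Ω_α} − (1/(2c²)) |∇U|²`
is linearized by `Ψ = e^{U/(2c²)}`: `U` solves it iff `Ψ` solves
`ΔΨ = (2πG/c⁴) Ψ Σ_α ε_α χ_{Ω_α}`. -/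
theorem giulini_linearization (G c : ℝ) (hG : 0 < G) (hc : 0 < c)
    (N : ℕ) (Ω : Fin N → Set E3)
    (hΩo : ∀ α, IsOpen (Ω α)) (hΩb : ∀ α, Bornology.IsBounded (Ω α))
    (ε : Fin N → E3 → ℝ) (hεc : ∀ α, Continuous (ε α))
    (hεpos : ∀ α, ∀ x ∈ Ω α, 0 < ε α x)
    (U : E3 → ℝ) (hU : ContDiff ℝ 2 U) :
    (∀ x, lap U x =
        (4 * π * G / c ^ 2) * ∑ α, Set.indicator (Ω α) (ε α) x
          - (1 / (2 * c ^ 2)) * ∑ i, (pd i U x) ^ 2) ↔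
    (∀ x, lap (fun y => Real.exp (U y / (2 * c ^ 2))) x =
        (2 * π * G / c ^ 4) * Real.exp (U x / (2 * c ^ 2)) *
          ∑ α, Set.indicator (Ω α) (ε α) x) :=
  giulini_linearization_general G c hc N Ω ε U hU

end
end

section
/- Let U be a C² solution of the Giulini field equation ΔU = (4πG/c²) Σ_α ε_α χ_{Ω_α} − (1/(2c²))(∂U)² with ε_α > 0 on nonempty Ω_α, decaying at infinity with expansion U = −Gm/r + O(1/r²), ∂U = O(1/r²). Then the mass m = (1/(4πG)) lim_{R→∞} ∫_{S_R} e^{U/(2c²)} ∂_i U dS^i is strictly positive. -/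
open Real MeasureTheory

noncomputable section

/-!
`Ψ = e^{U/(2c²)}` linearizes the field equation: `ΔΨ = (2πG/c⁴) Ψ Σ_α ε_α χ_{Ω_α} ≥ 0`, and
`ΔΨ ≥ μ > 0` on a small ball `B(x₀, r)` inside one of the bodies. Instead of Gauss's theorem we
use a comparison function: adding `k` times a `C²` regularization of `1 / ‖x - x₀‖`, harmonic
outside the ball and with Laplacian `≥ -μ / k` inside, keeps `Ψ` subharmonic. Since `U → 0` at
infinity the sum tends to `1`, so by the maximum principle `Ψ + k / ‖x - x₀‖ ≤ 1` far out.
With `Ψ ≥ 1 + U / (2c²)` this gives `‖x‖ U(x) ≤ -k c²` for large `‖x‖`, while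
`‖x‖ U(x) → -G m` by the expansion of `U`; hence `G m ≥ k c² > 0`.
-/

open Filter Topology Bornology

def PdTwiceDifferentiable (f : E3 → ℝ) : Prop :=
  Differentiable ℝ f ∧ ∀ i, Differentiable ℝ (pd i f)

lemma pd_eq_of_hasFDerivAt {f : E3 → ℝ} {L : E3 →L[ℝ] ℝ} {x : E3} (h : HasFDerivAt f L x)
    (i : Fin 3) : pd i f x = L (EuclideanSpace.single i 1) := by
  rw [pd, h.fderiv]

lemma pd_add {f g : E3 → ℝ} (hf : Differentiable ℝ f) (hg : Differentiable ℝ g) (i : Fin 3) :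
    pd i (fun x => f x + g x) = fun x => pd i f x + pd i g x := by
  ext x
  exact pd_eq_of_hasFDerivAt ((hf x).hasFDerivAt.add (hg x).hasFDerivAt) i

lemma PdTwiceDifferentiable.add {f g : E3 → ℝ} (hf : PdTwiceDifferentiable f)
    (hg : PdTwiceDifferentiable g) : PdTwiceDifferentiable fun x => f x + g x :=
  ⟨hf.1.add hg.1, fun i => by rw [pd_add hf.1 hg.1]; exact (hf.2 i).add (hg.2 i)⟩

lemma lap_add {f g : E3 → ℝ} (hf : PdTwiceDifferentiable f) (hg : PdTwiceDifferentiable g)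
    (x : E3) : lap (fun x => f x + g x) x = lap f x + lap g x := by
  simp only [lap, pd_add hf.1 hg.1, pd_add (hf.2 _) (hg.2 _), Finset.sum_add_distrib]

lemma ContDiff.pdTwiceDifferentiable {f : E3 → ℝ} (hf : ContDiff ℝ 2 f) :
    PdTwiceDifferentiable f :=
  ⟨hf.differentiable (by norm_num), fun i =>
    ((hf.fderiv_right (m := 1) (by norm_num)).clm_apply contDiff_const).differentiable
      one_ne_zero⟩

section Comp

variable {u : E3 → ℝ} {g g₁ g₂ : ℝ → ℝ}

lemma pd_comp_s10 (hu : Differentiable ℝ u) (hg : ∀ t, HasDerivAt g (g₁ t) t) (i : Fin 3) :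
    pd i (fun x => g (u x)) = fun x => g₁ (u x) * pd i u x := by
  ext x
  rw [pd_eq_of_hasFDerivAt (f := fun x => g (u x))
    ((hg (u x)).comp_hasFDerivAt x (hu x).hasFDerivAt) i]
  rfl

lemma PdTwiceDifferentiable.comp (hu : PdTwiceDifferentiable u)
    (hg : ∀ t, HasDerivAt g (g₁ t) t) (hg₁ : ∀ t, HasDerivAt g₁ (g₂ t) t) :
    PdTwiceDifferentiable fun x => g (u x) := by
  refine ⟨fun x => ((hg (u x)).comp_hasFDerivAt x (hu.1 x).hasFDerivAt).differentiableAt,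
    fun i => ?_⟩
  rw [pd_comp_s10 hu.1 hg]
  have hg₁u : Differentiable ℝ fun x => g₁ (u x) := fun x =>
    ((hg₁ (u x)).comp_hasFDerivAt x (hu.1 x).hasFDerivAt).differentiableAt
  exact hg₁u.mul (hu.2 i)

lemma lap_comp_s10 (hu : PdTwiceDifferentiable u) (hg : ∀ t, HasDerivAt g (g₁ t) t)
    (hg₁ : ∀ t, HasDerivAt g₁ (g₂ t) t) (x : E3) :
    lap (fun x => g (u x)) x = g₁ (u x) * lap u x + g₂ (u x) * ∑ i, pd i u x ^ 2 := by
  have hterm : ∀ i, pd i (pd i fun x => g (u x)) x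
      = g₁ (u x) * pd i (pd i u) x + g₂ (u x) * pd i u x ^ 2 := by
    intro i
    rw [pd_comp_s10 hu.1 hg, pd_eq_of_hasFDerivAt (f := fun x => g₁ (u x) * pd i u x)
      (((hg₁ (u x)).comp_hasFDerivAt x (hu.1 x).hasFDerivAt).mul (hu.2 i x).hasFDerivAt) i]
    change g₁ (u x) * pd i (pd i u) x + pd i u x * (g₂ (u x) * pd i u x) = _
    ring
  simp only [lap, hterm, Finset.sum_add_distrib, Finset.mul_sum]

end Comp

section NormSq

variable (x₀ : E3)

lemma pd_normSq_sub (i : Fin 3) :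
    pd i (fun y : E3 => ‖y - x₀‖ ^ 2) = fun x => 2 * (x i - x₀ i) := by
  ext x
  rw [pd_eq_of_hasFDerivAt (f := fun y : E3 => ‖y - x₀‖ ^ 2)
    (((hasFDerivAt_id x).sub_const x₀).norm_sq) i]
  simp [EuclideanSpace.inner_single_right]

lemma pdTwiceDifferentiable_normSq_sub : PdTwiceDifferentiable fun y : E3 => ‖y - x₀‖ ^ 2 :=
  ((contDiff_norm_sq ℝ).comp (contDiff_id.sub contDiff_const)).pdTwiceDifferentiable

lemma lap_normSq_sub (x : E3) : lap (fun y : E3 => ‖y - x₀‖ ^ 2) x = 6 := by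
  have hterm : ∀ i, pd i (pd i fun y : E3 => ‖y - x₀‖ ^ 2) x = 2 := by
    intro i
    rw [pd_normSq_sub, pd_eq_of_hasFDerivAt (f := fun x : E3 => 2 * (x i - x₀ i))
      (((EuclideanSpace.proj (𝕜 := ℝ) i).hasFDerivAt.sub_const (x₀ i)).const_mul 2) i]
    simp
  simp only [lap, hterm, Finset.sum_const, Finset.card_univ, Fintype.card_fin]
  norm_num

lemma sum_pd_normSq_sub_sq (x : E3) :
    ∑ i, pd i (fun y : E3 => ‖y - x₀‖ ^ 2) x ^ 2 = 4 * ‖x - x₀‖ ^ 2 := by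
  simp only [pd_normSq_sub]
  simp only [EuclideanSpace.norm_sq_eq, mul_pow, Finset.mul_sum, Real.norm_eq_abs, sq_abs,
    PiLp.sub_apply]
  norm_num

lemma lap_comp_normSq_sub {g g₁ g₂ : ℝ → ℝ} (hg : ∀ t, HasDerivAt g (g₁ t) t)
    (hg₁ : ∀ t, HasDerivAt g₁ (g₂ t) t) (x : E3) :
    lap (fun y => g (‖y - x₀‖ ^ 2)) x
      = 6 * g₁ (‖x - x₀‖ ^ 2) + 4 * ‖x - x₀‖ ^ 2 * g₂ (‖x - x₀‖ ^ 2) := by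
  rw [lap_comp_s10 (pdTwiceDifferentiable_normSq_sub x₀) hg hg₁, lap_normSq_sub,
    sum_pd_normSq_sub_sq]
  ring

end NormSq

/-- A local maximum with `f'' > 0` would also be a local minimum, so `f` would be locally constant
and `f''` would vanish. -/
lemma deriv_deriv_nonpos_of_isLocalMax {f : ℝ → ℝ} {a : ℝ} (h : IsLocalMax f a)
    (hc : ContinuousAt f a) : deriv (deriv f) a ≤ 0 := by
  by_contra! hpos
  have hconst : ∀ᶠ x in 𝓝 a, f x = f a :=
    (h.and (isLocalMin_of_deriv_deriv_pos hpos h.deriv_eq_zero hc)).mono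
      fun x hx => le_antisymm hx.1 hx.2
  have hderiv : deriv f =ᶠ[𝓝 a] fun _ => 0 :=
    hconst.eventually_nhds.mono fun x (hx : f =ᶠ[𝓝 x] fun _ => f a) =>
      hx.deriv_eq.trans (deriv_const x (f a))
  rw [hderiv.deriv_eq, deriv_const] at hpos
  exact hpos.false

lemma deriv_comp_add_smul {f : E3 → ℝ} (hf : Differentiable ℝ f) (w : E3) (i : Fin 3) :
    deriv (fun t : ℝ => f (w + t • EuclideanSpace.single i 1))
      = fun t => pd i f (w + t • EuclideanSpace.single i 1) := by
  ext t
  have hline : HasDerivAt (fun t : ℝ => w + t • EuclideanSpace.single i (1 : ℝ))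
      (EuclideanSpace.single i 1) t := by
    simpa using ((hasDerivAt_id t).smul_const (EuclideanSpace.single i (1 : ℝ))).const_add w
  exact ((hf _).hasFDerivAt.comp_hasDerivAt t hline).deriv

lemma pd_pd_nonpos_of_isLocalMax {f : E3 → ℝ} (hf : PdTwiceDifferentiable f) {w : E3}
    (h : IsLocalMax f w) (i : Fin 3) : pd i (pd i f) w ≤ 0 := by
  set g : ℝ → ℝ := fun t => f (w + t • EuclideanSpace.single i 1)
  have hline : Continuous fun t : ℝ => w + t • EuclideanSpace.single i (1 : ℝ) := by fun_prop
  have hg : IsLocalMax g 0 :=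
    IsLocalMax.comp_continuous (by simpa using h) hline.continuousAt
  have key := deriv_deriv_nonpos_of_isLocalMax hg (hf.1.continuous.comp hline).continuousAt
  simpa [g, deriv_comp_add_smul hf.1, deriv_comp_add_smul (hf.2 i)] using key

lemma exists_norm_eq_le_of_lap_pos {f : E3 → ℝ} (hf : PdTwiceDifferentiable f)
    (hlap : ∀ x, 0 < lap f x) {P : ℝ} {y : E3} (hy : ‖y‖ ≤ P) :
    ∃ w : E3, ‖w‖ = P ∧ f y ≤ f w := by
  obtain ⟨w, hw, hmax⟩ := (isCompact_closedBall (0 : E3) P).exists_isMaxOn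
    ⟨y, mem_closedBall_zero_iff.2 hy⟩ hf.1.continuous.continuousOn
  refine ⟨w, (mem_closedBall_zero_iff.1 hw).eq_of_not_lt fun hlt => ?_,
    hmax (mem_closedBall_zero_iff.2 hy)⟩
  have hloc : IsLocalMax f w :=
    hmax.isLocalMax (Metric.closedBall_mem_nhds_of_mem (mem_ball_zero_iff.2 hlt))
  exact (hlap w).not_ge (Finset.sum_nonpos fun i _ => pd_pd_nonpos_of_isLocalMax hf hloc i)

lemma le_of_lap_nonneg_of_tendsto_cobounded {f : E3 → ℝ} (hf : PdTwiceDifferentiable f)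
    (hlap : ∀ x, 0 ≤ lap f x) {L : ℝ} (hlim : Tendsto f (cobounded E3) (𝓝 L)) (y : E3) :
    f y ≤ L := by
  refine le_of_forall_pos_lt_add fun ε hε => ?_
  obtain ⟨P₀, -, hP₀⟩ := hasBasis_cobounded_norm.eventually_iff.1
    (hlim.eventually (gt_mem_nhds (show L < L + ε / 2 by linarith)))
  set P := max P₀ ‖y‖
  set δ := ε / (2 * (P ^ 2 + 1))
  have hδ : 0 < δ := by positivity
  have hderiv : ∀ t, HasDerivAt (fun t => t * δ) δ t := fun _ => hasDerivAt_mul_const δ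
  have hderiv' : ∀ t, HasDerivAt (fun _ : ℝ => δ) 0 t := fun t => hasDerivAt_const t δ
  -- the perturbation `δ ‖x‖²` makes the Laplacian strictly positive
  have hpert : PdTwiceDifferentiable fun x => f x + ‖x - 0‖ ^ 2 * δ :=
    hf.add ((pdTwiceDifferentiable_normSq_sub 0).comp hderiv hderiv')
  have hpert_lap : ∀ x, 0 < lap (fun x => f x + ‖x - 0‖ ^ 2 * δ) x := fun x => by
    rw [lap_add hf ((pdTwiceDifferentiable_normSq_sub 0).comp hderiv hderiv'),
      lap_comp_normSq_sub 0 hderiv hderiv']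
    linarith [hlap x]
  obtain ⟨w, hw, hyw⟩ := exists_norm_eq_le_of_lap_pos hpert hpert_lap (le_max_right P₀ ‖y‖)
  simp only [sub_zero, hw] at hyw
  have hfw : f w < L + ε / 2 := hP₀ (show P₀ ≤ ‖w‖ from hw ▸ le_max_left P₀ ‖y‖)
  have hPδ : P ^ 2 * δ < ε / 2 := by
    rw [show P ^ 2 * δ = ε / 2 * (P ^ 2 / (P ^ 2 + 1)) by simp only [δ]; field_simp]
    exact mul_lt_of_lt_one_right (by positivity) ((div_lt_one (by positivity)).2 (by linarith))
  nlinarith [norm_nonneg y]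

lemma hasDerivAt_ite_le {p q p' q' : ℝ → ℝ} {c : ℝ}
    (hp : ∀ s ≤ c, HasDerivAt p (p' s) s) (hq : ∀ s, c ≤ s → HasDerivAt q (q' s) s)
    (hval : p c = q c) (hder : p' c = q' c) (s : ℝ) :
    HasDerivAt (fun s => if s ≤ c then p s else q s) (if s ≤ c then p' s else q' s) s := by
  rcases lt_trichotomy s c with hs | rfl | hs
  · rw [if_pos hs.le]
    exact (hp s hs.le).congr_of_eventuallyEq
      ((eventually_lt_nhds hs).mono fun t ht => if_pos ht.le)
  · rw [if_pos le_rfl]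
    have hleft : HasDerivWithinAt (fun t => if t ≤ s then p t else q t) (p' s) (Set.Iic s) s :=
      (hp s le_rfl).hasDerivWithinAt.congr (fun t ht => if_pos ht) (if_pos le_rfl)
    have hright : HasDerivWithinAt (fun t => if t ≤ s then p t else q t) (p' s) (Set.Ici s) s := by
      refine (hder ▸ hq s le_rfl).hasDerivWithinAt.congr (fun t ht => ?_) (by simp [hval])
      split_ifs with h
      · rw [le_antisymm h ht, hval]
      · rfl
    simpa using hleft.union hright
  · rw [if_neg hs.not_ge]
    exact (hq s hs.le).congr_of_eventuallyEq
      ((eventually_gt_nhds hs).mono fun t ht => if_neg ht.not_ge)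

/-- Inside `s ≤ r²` the quadratic agrees with `s ^ (-1/2)` to second order at `s = r²`, so that
`x ↦ regInvSqrt r ‖x‖²` is a twice differentiable modification of `1 / ‖x‖` inside the ball of
radius `r`. -/
def regInvSqrt (r : ℝ) (s : ℝ) : ℝ :=
  if s ≤ r ^ 2 then 15 / (8 * r) - 5 / (4 * r ^ 3) * s + 3 / (8 * r ^ 5) * s ^ 2
  else s ^ (-1 / 2 : ℝ)

def regInvSqrtDeriv (r : ℝ) (s : ℝ) : ℝ :=
  if s ≤ r ^ 2 then -(5 / (4 * r ^ 3)) + 3 / (4 * r ^ 5) * s else -1 / 2 * s ^ (-3 / 2 : ℝ)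

def regInvSqrtDeriv2 (r : ℝ) (s : ℝ) : ℝ :=
  if s ≤ r ^ 2 then 3 / (4 * r ^ 5) else 3 / 4 * s ^ (-5 / 2 : ℝ)

section RegInvSqrt

variable {r : ℝ}

lemma hasDerivAt_regInvSqrt (hr : 0 < r) (s : ℝ) :
    HasDerivAt (regInvSqrt r) (regInvSqrtDeriv r s) s := by
  unfold regInvSqrt regInvSqrtDeriv
  apply hasDerivAt_ite_le
  · intro t _
    exact (((hasDerivAt_const t _).sub ((hasDerivAt_id t).const_mul _)).add
      ((hasDerivAt_pow 2 t).const_mul _)).congr_deriv (by ring)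
  · intro t ht
    convert Real.hasDerivAt_rpow_const (p := (-1 / 2 : ℝ))
      (Or.inl (lt_of_lt_of_le (by positivity) ht).ne') using 3
    norm_num
  · rw [← Real.rpow_natCast r 2, ← Real.rpow_mul hr.le]
    norm_num [Real.rpow_neg_one]
    field_simp
    ring
  · rw [← Real.rpow_natCast r 2, ← Real.rpow_mul hr.le]
    norm_num
    field_simp
    ring

lemma hasDerivAt_regInvSqrtDeriv (hr : 0 < r) (s : ℝ) :
    HasDerivAt (regInvSqrtDeriv r) (regInvSqrtDeriv2 r s) s := by
  unfold regInvSqrtDeriv regInvSqrtDeriv2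
  apply hasDerivAt_ite_le
  · intro t _
    exact ((hasDerivAt_const t _).add ((hasDerivAt_id t).const_mul _)).congr_deriv (by simp)
  · intro t ht
    refine ((Real.hasDerivAt_rpow_const (p := (-3 / 2 : ℝ))
      (Or.inl (lt_of_lt_of_le (by positivity) ht).ne')).const_mul (-1 / 2 : ℝ)).congr_deriv ?_
    norm_num
    ring
  · rw [← Real.rpow_natCast r 2, ← Real.rpow_mul hr.le]
    norm_num
    field_simp
    ring
  · rw [← Real.rpow_natCast r 2, ← Real.rpow_mul hr.le]
    norm_num
    field_simp

lemma neg_le_regInvSqrt_radialLap (hr : 0 < r) {s : ℝ} (hs₀ : 0 ≤ s) (hs : s ≤ r ^ 2) :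
    -(15 / (2 * r ^ 3)) ≤ 6 * regInvSqrtDeriv r s + 4 * s * regInvSqrtDeriv2 r s := by
  rw [regInvSqrtDeriv, regInvSqrtDeriv2, if_pos hs, if_pos hs,
    show 6 * (-(5 / (4 * r ^ 3)) + 3 / (4 * r ^ 5) * s) + 4 * s * (3 / (4 * r ^ 5))
      = -(15 / (2 * r ^ 3)) + 15 / (2 * r ^ 5) * s by field_simp; ring]
  have : 0 ≤ 15 / (2 * r ^ 5) * s := by positivity
  linarith

lemma regInvSqrt_radialLap_eq_zero (hr : 0 < r) {s : ℝ} (hs : r ^ 2 < s) :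
    6 * regInvSqrtDeriv r s + 4 * s * regInvSqrtDeriv2 r s = 0 := by
  have hs₀ : 0 < s := lt_trans (by positivity) hs
  rw [regInvSqrtDeriv, regInvSqrtDeriv2, if_neg hs.not_ge, if_neg hs.not_ge,
    show (-3 / 2 : ℝ) = 1 + -5 / 2 by norm_num, Real.rpow_add hs₀, Real.rpow_one]
  ring

lemma regInvSqrt_sq (hr : 0 < r) {t : ℝ} (ht : r ≤ t) : regInvSqrt r (t ^ 2) = t⁻¹ := by
  have ht₀ : 0 < t := hr.trans_le ht
  rcases ht.eq_or_lt with rfl | hlt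
  · rw [regInvSqrt, if_pos le_rfl]
    field_simp
    ring
  · rw [regInvSqrt, if_neg (pow_lt_pow_left₀ hlt hr.le two_ne_zero).not_ge,
      ← Real.rpow_natCast t 2, ← Real.rpow_mul ht₀.le]
    norm_num [Real.rpow_neg_one]

end RegInvSqrt

lemma pdTwiceDifferentiable_regInvSqrt_normSq_sub {r : ℝ} (hr : 0 < r) (k : ℝ) (x₀ : E3) :
    PdTwiceDifferentiable fun y => k * regInvSqrt r (‖y - x₀‖ ^ 2) :=
  (pdTwiceDifferentiable_normSq_sub x₀).comp (fun t => (hasDerivAt_regInvSqrt hr t).const_mul k)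
    (fun t => (hasDerivAt_regInvSqrtDeriv hr t).const_mul k)

/-- The Laplacian of the bump `k * regInvSqrt r ‖y - x₀‖²` vanishes outside the ball and is at
least `-15 k / (2 r³)` inside it; the factor `k = 2 r³ μ / 15` makes this `-μ`. -/
lemma lap_add_regInvSqrt_nonneg {F : E3 → ℝ} (hF : PdTwiceDifferentiable F) {r μ : ℝ}
    (hr : 0 < r) (hμ : 0 ≤ μ) {x₀ : E3} (hin : ∀ x ∈ Metric.closedBall x₀ r, μ ≤ lap F x)
    (hout : ∀ x, 0 ≤ lap F x) (x : E3) :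
    0 ≤ lap (fun y => F y + 2 * r ^ 3 * μ / 15 * regInvSqrt r (‖y - x₀‖ ^ 2)) x := by
  set k := 2 * r ^ 3 * μ / 15
  have hk : 0 ≤ k := by positivity
  rw [lap_add hF (pdTwiceDifferentiable_regInvSqrt_normSq_sub hr k x₀),
    lap_comp_normSq_sub x₀ (fun t => (hasDerivAt_regInvSqrt hr t).const_mul k)
      (fun t => (hasDerivAt_regInvSqrtDeriv hr t).const_mul k)]
  rcases le_or_gt ‖x - x₀‖ r with hle | hgt
  · have hs : ‖x - x₀‖ ^ 2 ≤ r ^ 2 := pow_le_pow_left₀ (norm_nonneg _) hle 2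
    have hbump := mul_le_mul_of_nonneg_left (neg_le_regInvSqrt_radialLap hr (by positivity) hs) hk
    have hkr : k * -(15 / (2 * r ^ 3)) = -μ := by simp only [k]; field_simp
    nlinarith [hin x (mem_closedBall_iff_norm.2 hle)]
  · have hs : r ^ 2 < ‖x - x₀‖ ^ 2 := pow_lt_pow_left₀ hgt hr.le two_ne_zero
    have hbump := regInvSqrt_radialLap_eq_zero hr hs
    nlinarith [hout x]

lemma tendsto_regInvSqrt_normSq_sub_cobounded {E : Type*} [SeminormedAddCommGroup E] {r : ℝ}
    (hr : 0 < r) (x₀ : E) :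
    Tendsto (fun y => regInvSqrt r (‖y - x₀‖ ^ 2)) (cobounded E) (𝓝 0) := by
  have hnorm : Tendsto (fun y => ‖y - x₀‖) (cobounded E) atTop :=
    tendsto_norm_cobounded_atTop.comp (tendsto_sub_const_cobounded x₀)
  refine (tendsto_inv_atTop_zero.comp hnorm).congr' ?_
  filter_upwards [hnorm.eventually_ge_atTop r] with y hy
  exact (regInvSqrt_sq hr hy).symm

section Expansion

variable {E : Type*} [SeminormedAddCommGroup E] {U : E → ℝ} {a C R : ℝ}

lemma tendsto_norm_mul_of_abs_add_div_le (h : ∀ x, R ≤ ‖x‖ → |U x + a / ‖x‖| ≤ C / ‖x‖ ^ 2) :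
    Tendsto (fun x => ‖x‖ * U x) (cobounded E) (𝓝 (-a)) := by
  rw [tendsto_iff_norm_sub_tendsto_zero]
  refine squeeze_zero' (Eventually.of_forall fun _ => norm_nonneg _) ?_
    ((tendsto_const_nhds (x := C)).div_atTop tendsto_norm_cobounded_atTop)
  filter_upwards [eventually_cobounded_le_norm (max R 1)] with x hx
  have hx₀ : 0 < ‖x‖ := by linarith [le_max_right R 1]
  calc ‖‖x‖ * U x - -a‖ = ‖x‖ * |U x + a / ‖x‖| := by
        rw [Real.norm_eq_abs, ← abs_of_pos hx₀, ← abs_mul, abs_of_pos hx₀]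
        congr 1
        field_simp
        ring
    _ ≤ ‖x‖ * (C / ‖x‖ ^ 2) := by gcongr; exact h x (le_of_max_le_left hx)
    _ = C / ‖x‖ := by field_simp

lemma tendsto_zero_of_abs_add_div_le (h : ∀ x, R ≤ ‖x‖ → |U x + a / ‖x‖| ≤ C / ‖x‖ ^ 2) :
    Tendsto U (cobounded E) (𝓝 0) := by
  have hlim := (tendsto_inv_atTop_zero.comp tendsto_norm_cobounded_atTop).mul
    (tendsto_norm_mul_of_abs_add_div_le h)
  rw [zero_mul] at hlim
  refine hlim.congr' ?_
  filter_upwards [eventually_cobounded_le_norm 1] with x hx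
  simp [(show ‖x‖ ≠ 0 by linarith)]

end Expansion

lemma hasDerivAt_exp_const_mul (b t : ℝ) :
    HasDerivAt (fun t => exp (b * t)) (b * exp (b * t)) t := by
  simpa [mul_comm] using ((hasDerivAt_id t).const_mul b).exp

lemma lap_exp_const_mul {u : E3 → ℝ} (hu : PdTwiceDifferentiable u) (b : ℝ) (x : E3) :
    lap (fun x => exp (b * u x)) x = b * exp (b * u x) * (lap u x + b * ∑ i, pd i u x ^ 2) := by
  rw [lap_comp_s10 hu (hasDerivAt_exp_const_mul b)
    (fun t => (hasDerivAt_exp_const_mul b t).const_mul b)]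
  ring

lemma exists_pos_le_on_closedBall {X : Type*} [MetricSpace X] [ProperSpace X] {f g : X → ℝ}
    {Ω : Set X} (hΩ : IsOpen Ω) {x₀ : X} (hx₀ : x₀ ∈ Ω) (hg : Continuous g)
    (hgpos : ∀ x ∈ Ω, 0 < g x) (hgf : ∀ x ∈ Ω, g x ≤ f x) :
    ∃ r > 0, ∃ μ > 0, ∀ x ∈ Metric.closedBall x₀ r, μ ≤ f x := by
  obtain ⟨r, hr, hball⟩ := Metric.nhds_basis_closedBall.mem_iff.1 (hΩ.mem_nhds hx₀)
  obtain ⟨z, hz, hmin⟩ := (isCompact_closedBall x₀ r).exists_isMinOn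
    (Metric.nonempty_closedBall.2 hr.le) hg.continuousOn
  exact ⟨r, hr, g z, hgpos z (hball hz), fun x hx => (hmin hx).trans (hgf x (hball hx))⟩

lemma le_of_exp_add_regInvSqrt_le_one {E : Type*} [NormedAddCommGroup E] [NormedSpace ℝ E]
    [Nontrivial E] {U : E → ℝ} {a C R b k r : ℝ} {x₀ : E} (hb : 0 < b) (hk : 0 ≤ k)
    (hr : 0 < r) (hU : ∀ x, R ≤ ‖x‖ → |U x + a / ‖x‖| ≤ C / ‖x‖ ^ 2)
    (hle : ∀ y, exp (b * U y) + k * regInvSqrt r (‖y - x₀‖ ^ 2) ≤ 1) :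
    k / (2 * b) ≤ a := by
  have hev : ∀ᶠ y in cobounded E, ‖y‖ * U y ≤ -(k / (2 * b)) := by
    filter_upwards [eventually_cobounded_le_norm (‖x₀‖ + r)] with y hy
    have hy₀ : 0 < ‖y‖ := by linarith [norm_nonneg x₀]
    have hfar : r ≤ ‖y - x₀‖ := by linarith [norm_sub_norm_le y x₀]
    have hnear : k / (2 * ‖y‖) ≤ k * ‖y - x₀‖⁻¹ := by
      rw [div_eq_mul_inv]
      gcongr <;> linarith [norm_sub_le y x₀]
    have hley := hle y
    rw [regInvSqrt_sq hr hfar] at hley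
    have hbU : b * U y ≤ -(k / (2 * ‖y‖)) := by linarith [add_one_le_exp (b * U y)]
    calc ‖y‖ * U y = ‖y‖ * (b * U y) / b := by field_simp
      _ ≤ ‖y‖ * -(k / (2 * ‖y‖)) / b := by gcongr
      _ = -(k / (2 * b)) := by field_simp
  exact neg_le_neg_iff.1 (le_of_tendsto (tendsto_norm_mul_of_abs_add_div_le hU) hev)

theorem giulini_mass_positive_general (G c : ℝ) (hG : 0 < G) (hc : 0 < c)
    (N : ℕ) (hN : 0 < N) (Ω : Fin N → Set E3)
    (hΩo : ∀ α, IsOpen (Ω α))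
    (hΩne : ∀ α, (Ω α).Nonempty)
    (ε : Fin N → E3 → ℝ) (hεc : ∀ α, Continuous (ε α))
    (hεpos : ∀ α, ∀ x ∈ Ω α, 0 < ε α x)
    (U : E3 → ℝ) (hU : ContDiff ℝ 2 U)
    (hfield : ∀ x, lap U x =
      (4 * π * G / c ^ 2) * ∑ α, Set.indicator (Ω α) (ε α) x
        - (1 / (2 * c ^ 2)) * ∑ i, (pd i U x) ^ 2)
    (m C R : ℝ)
    (hexp : ∀ x : E3, R ≤ ‖x‖ →
      |U x + G * m / ‖x‖| ≤ C / ‖x‖ ^ 2 ∧ ‖fderiv ℝ U x‖ ≤ C / ‖x‖ ^ 2) :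
    0 < m := by
  set b := 1 / (2 * c ^ 2)
  set K := 4 * π * G / c ^ 2
  set Ψ : E3 → ℝ := fun x => exp (b * U x)
  have hU₂ := hU.pdTwiceDifferentiable
  have hΨ : PdTwiceDifferentiable Ψ :=
    hU₂.comp (hasDerivAt_exp_const_mul b) fun t => (hasDerivAt_exp_const_mul b t).const_mul b
  have hlapΨ : ∀ x, lap Ψ x = b * K * Ψ x * ∑ α, (Ω α).indicator (ε α) x := fun x => by
    rw [lap_exp_const_mul hU₂, hfield]
    ring
  have hρ : ∀ x α, 0 ≤ (Ω α).indicator (ε α) x := fun x α =>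
    Set.indicator_nonneg (fun y hy => (hεpos α y hy).le) x
  have hlapΨ_nonneg : ∀ x, 0 ≤ lap Ψ x := fun x => by
    rw [hlapΨ]
    have := Finset.sum_nonneg fun α (_ : α ∈ Finset.univ) => hρ x α
    positivity
  set α₀ : Fin N := ⟨0, hN⟩
  obtain ⟨x₀, hx₀⟩ := hΩne α₀
  obtain ⟨r, hr, μ, hμ, hin⟩ := exists_pos_le_on_closedBall (f := lap Ψ)
    (g := fun x => b * K * Ψ x * ε α₀ x) (hΩo α₀) hx₀
    (by have := hU.continuous; have := hεc α₀; fun_prop)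
    (fun x hx => by have := hεpos α₀ x hx; positivity)
    (fun x hx => by
      rw [hlapΨ, ← Set.indicator_of_mem hx (ε α₀)]
      gcongr
      exact Finset.single_le_sum (fun α _ => hρ x α) (Finset.mem_univ α₀))
  set k := 2 * r ^ 3 * μ / 15
  have hΦ_le : ∀ y, Ψ y + k * regInvSqrt r (‖y - x₀‖ ^ 2) ≤ 1 := by
    refine le_of_lap_nonneg_of_tendsto_cobounded
      (hΨ.add (pdTwiceDifferentiable_regInvSqrt_normSq_sub hr k x₀))
      (lap_add_regInvSqrt_nonneg hΨ hr hμ.le hin hlapΨ_nonneg) ?_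
    have hUlim := tendsto_zero_of_abs_add_div_le fun x hx => (hexp x hx).1
    simpa using ((hUlim.const_mul b).rexp).add
      ((tendsto_regInvSqrt_normSq_sub_cobounded hr x₀).const_mul k)
  have hGm : k / (2 * b) ≤ G * m := le_of_exp_add_regInvSqrt_le_one (by positivity)
    (by positivity) hr (fun x hx => (hexp x hx).1) hΦ_le
  exact pos_of_mul_pos_right ((by positivity : 0 < k / (2 * b)).trans_le hGm) hG.le

/-- positivity of the mass in the Giulini theory. If `U` is a `C²`
solution of `ΔU = (4πG/c²) Σ_α ε_α χ_{Ω_α} − (1/(2c²))(∂U)²` with `ε_α > 0` on the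
nonempty bodies `Ω_α`, and `U` has the decaying expansion `U = −Gm/r + O(1/r²)`,
`∂U = O(1/r²)`, then `m > 0`. -/
theorem giulini_mass_positive (G c : ℝ) (hG : 0 < G) (hc : 0 < c)
    (N : ℕ) (hN : 0 < N) (Ω : Fin N → Set E3)
    (hΩo : ∀ α, IsOpen (Ω α)) (hΩb : ∀ α, Bornology.IsBounded (Ω α))
    (hΩne : ∀ α, (Ω α).Nonempty)
    (ε : Fin N → E3 → ℝ) (hεc : ∀ α, Continuous (ε α))
    (hεpos : ∀ α, ∀ x ∈ Ω α, 0 < ε α x)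
    (U : E3 → ℝ) (hU : ContDiff ℝ 2 U)
    (hfield : ∀ x, lap U x =
      (4 * π * G / c ^ 2) * ∑ α, Set.indicator (Ω α) (ε α) x
        - (1 / (2 * c ^ 2)) * ∑ i, (pd i U x) ^ 2)
    (m C R : ℝ) (hR : 0 < R)
    (hexp : ∀ x : E3, R ≤ ‖x‖ →
      |U x + G * m / ‖x‖| ≤ C / ‖x‖ ^ 2 ∧ ‖fderiv ℝ U x‖ ≤ C / ‖x‖ ^ 2) :
    0 < m :=
  giulini_mass_positive_general G c hG hc N hN Ω hΩo hΩne ε hεc hεpos U hU hfield m C R hexp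
end
end
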